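/- arXiv:2011.11963 — 2 statements merged into one kernel-verified Lean document; each statement's English description precedes it below -/
import Mathlib

section
/- Let P be any unitary in P(ρ_i). Then P(ρ_i) = { U P V : U, V unitary n×n matrices with U†AU = A and Vρ_iV† = ρ_i }. -/
open Matrix Kronecker
open scoped ComplexOrder

attribute [local instance] Matrix.frobeniusSeminormedAddCommGroup
  Matrix.frobeniusNormedAddCommGroup Matrix.frobeniusNormedSpace

noncomputable section

namespace QSLPaper

/-- `U` is a unitary matrix. -/
def IsUnitary {ι : Type*} [Fintype ι] [DecidableEq ι] (U : Matrix ι ι ℂ) : Prop :=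
  Uᴴ * U = 1

/-- `ρ` is a density matrix: positive semidefinite with unit trace. -/
def IsDensity {ι : Type*} [Fintype ι] [DecidableEq ι] (ρ : Matrix ι ι ℂ) : Prop :=
  ρ.PosSemidef ∧ ρ.trace = 1

/-- `ρ` is passive relative to the observable `A` and the initial state `ρi`:
`tr(ρA) ≤ tr(VρiV†A)` for every unitary `V`. -/
def IsPassive {ι : Type*} [Fintype ι] [DecidableEq ι] (A ρi ρ : Matrix ι ι ℂ) : Prop :=
  ∀ V : Matrix ι ι ℂ, IsUnitary V → ((ρ * A).trace).re ≤ (((V * ρi * Vᴴ) * A).trace).re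

/-- `ρ` is a passive state: a state (unitary conjugate of `ρi`) which is passive. -/
def IsPassiveState {ι : Type*} [Fintype ι] [DecidableEq ι] (A ρi ρ : Matrix ι ι ℂ) : Prop :=
  (∃ U, IsUnitary U ∧ ρ = U * ρi * Uᴴ) ∧ IsPassive A ρi ρ

/-- `P(ρi)`: the set of unitaries transforming `ρi` into a passive state. -/
def PassivizingSet {ι : Type*} [Fintype ι] [DecidableEq ι] (A ρi : Matrix ι ι ℂ) :
    Set (Matrix ι ι ℂ) :=
  {U | IsUnitary U ∧ IsPassive A ρi (U * ρi * Uᴴ)}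

/-- There is a continuous family of Hermitian Hamiltonians on `[0,τ]` with
`tr(H(t)²) ≤ b` driving `ρ0` (via the von Neumann equation) to a state satisfying `final`
in time `τ`. -/
def ReachesIn {ι : Type*} [Fintype ι] [DecidableEq ι]
    (ρ0 : Matrix ι ι ℂ) (final : Matrix ι ι ℂ → Prop) (b τ : ℝ) : Prop :=
  ∃ H ρ : ℝ → Matrix ι ι ℂ,
    ContinuousOn H (Set.Icc 0 τ) ∧
    (∀ t ∈ Set.Icc (0:ℝ) τ, (H t).IsHermitian) ∧
    (∀ t ∈ Set.Icc (0:ℝ) τ, ((H t * H t).trace).re ≤ b) ∧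
    ρ 0 = ρ0 ∧
    (∀ t ∈ Set.Icc (0:ℝ) τ,
      HasDerivWithinAt ρ ((-Complex.I) • (H t * ρ t - ρ t * H t)) (Set.Icc 0 τ) t) ∧
    final (ρ τ)

/-- The passivization time: the infimum of times in which `ρi` can be driven to a passive
state by a Hamiltonian of bandwidth at most `ω²`. -/
def tauPas {ι : Type*} [Fintype ι] [DecidableEq ι] (A ρi : Matrix ι ι ℂ) (ω : ℝ) : ℝ :=
  sInf {τ | 0 ≤ τ ∧ ReachesIn ρi (IsPassive A ρi) (ω^2) τ}

/-- `e` is an orthonormal family (hence basis) of `ℂⁿ`. -/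
def IsONBasis {n : ℕ} (e : Fin n → (Fin n → ℂ)) : Prop :=
  ∀ j k, star (e j) ⬝ᵥ e k = if j = k then 1 else 0

/-- The discrepancy: given the eigenvalue lists `a` (of `A`), `p` (of `ρi`) and `q`
(of the reference passive state), it is the sum over the distinct eigenvalues `x` of `A`
of the cardinality of the multiset difference `{p k : a k = x} \ {q k : a k = x}`. -/
def discrepancy {n : ℕ} (a p q : Fin n → ℝ) : ℕ := by
  classical
  exact ∑ x ∈ Finset.univ.image a,
    ((((Finset.univ.filter fun k => a k = x)).val.map p)
      - (((Finset.univ.filter fun k => a k = x)).val.map q)).card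

end QSLPaper

/-!
A passive state `σ` commutes with `A`: for `C = σA - Aσ`, which is skew-Hermitian, the unitaries
`exp (t C)` give states `exp (t C) σ exp (t C)†` whose energy has derivative `tr (C C) = -‖C‖²`
at `t = 0`, while passivity makes `t = 0` a minimum. Hence `A` and `σ` are diagonal in a common
orthonormal basis, and testing passivity against the permutations of that basis shows that the
eigenvalues of `σ` decrease as those of `A` increase. Two passive states `PρᵢP†` and `WρᵢW†` have
the same spectrum as `ρᵢ`, so sorting both joint eigenbases (by the eigenvalue of `A`, ties broken
by that of the state) produces a unitary `U` with `U†AU = A` and `U (PρᵢP†) U† = WρᵢW†`. Then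
`W = U P V` for `V = (UP)† W`, which fixes `ρᵢ`. Conversely such a `U P V` conjugates `ρᵢ` to a
state with the same energy as `PρᵢP†`.
-/

attribute [local instance] Matrix.frobeniusNormedRing Matrix.frobeniusNormedAlgebra

open NormedSpace

open Module.End in
theorem LinearMap.IsSymmetric.re_eigenvalue {𝕜 E : Type*} [RCLike 𝕜] [NormedAddCommGroup E]
    [InnerProductSpace 𝕜 E] {T : E →ₗ[𝕜] E} (hT : T.IsSymmetric) {μ : 𝕜} {x : E}
    (hx : x ∈ eigenspace T μ) (hx0 : x ≠ 0) : (RCLike.re μ : 𝕜) = μ :=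
  RCLike.conj_eq_iff_re.mp (hT.conj_eigenvalue_eq_self (hasEigenvalue_of_hasEigenvector ⟨hx, hx0⟩))

open Module.End in
theorem LinearMap.IsSymmetric.exists_orthonormalBasis_eigenvectors_of_commute
    {𝕜 E : Type*} [RCLike 𝕜] [NormedAddCommGroup E] [InnerProductSpace 𝕜 E]
    [FiniteDimensional 𝕜 E] {n : ℕ} (hn : Module.finrank 𝕜 E = n) {S T : E →ₗ[𝕜] E}
    (hS : S.IsSymmetric) (hT : T.IsSymmetric) (hST : Commute S T) :
    ∃ (e : OrthonormalBasis (Fin n) 𝕜 E) (a b : Fin n → ℝ),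
      ∀ k, S (e k) = (a k : 𝕜) • e k ∧ T (e k) = (b k : 𝕜) • e k := by
  let V : 𝕜 × 𝕜 → Submodule 𝕜 E := fun μ => eigenspace S μ.2 ⊓ eigenspace T μ.1
  have hV : DirectSum.IsInternal V := hS.directSum_isInternal_of_commute hT hST
  -- `subordinateOrthonormalBasis` needs a finite index: keep only the nonzero joint eigenspaces
  have hV' : DirectSum.IsInternal fun μ : {μ // V μ ≠ ⊥} => V μ :=
    DirectSum.isInternal_ne_bot_iff.mpr hV
  have : Fintype {μ // V μ ≠ ⊥} :=
    (WellFoundedGT.finite_ne_bot_of_iSupIndep hV.submodule_iSupIndep).fintype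
  have hOrth := (hS.orthogonalFamily_eigenspace_inf_eigenspace hT).comp
    (Subtype.val_injective (p := fun μ => V μ ≠ ⊥))
  let e := hV'.subordinateOrthonormalBasis hn hOrth
  let μ : Fin n → 𝕜 × 𝕜 := fun k => (hV'.subordinateOrthonormalBasisIndex hn k hOrth).1
  have he : ∀ k, e k ∈ V (μ k) := fun k => hV'.subordinateOrthonormalBasis_subordinate hn k hOrth
  have he0 : ∀ k, e k ≠ 0 := fun k => e.orthonormal.ne_zero k
  refine ⟨e, fun k => RCLike.re (μ k).2, fun k => RCLike.re (μ k).1, fun k => ⟨?_, ?_⟩⟩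
  · rw [hS.re_eigenvalue (he k).1 (he0 k)]
    exact mem_eigenspace_iff.mp (he k).1
  · rw [hT.re_eigenvalue (he k).2 (he0 k)]
    exact mem_eigenspace_iff.mp (he k).2

open Polynomial in
theorem Matrix.roots_charpoly_diagonal {ι R : Type*} [Fintype ι] [DecidableEq ι] [CommRing R]
    [IsDomain R] (d : ι → R) : (diagonal d).charpoly.roots = Finset.univ.val.map d := by
  rw [charpoly_diagonal, Finset.prod_eq_multiset_prod,
    ← roots_multiset_prod_X_sub_C (Finset.univ.val.map d), Multiset.map_map]
  rfl

theorem Matrix.permMatrix_mul_diagonal_mul_conjTranspose {ι R : Type*} [Fintype ι]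
    [DecidableEq ι] [Semiring R] [StarRing R] (τ : Equiv.Perm ι) (d : ι → R) :
    τ.permMatrix R * diagonal d * (τ.permMatrix R)ᴴ = diagonal (d ∘ τ) := by
  rw [conjTranspose_permMatrix, PEquiv.toMatrix_toPEquiv_mul, PEquiv.mul_toMatrix_toPEquiv,
    submatrix_submatrix]
  exact submatrix_diagonal_equiv d τ

theorem antivary_of_forall_sum_mul_le_sum_comp_perm_mul {ι α : Type*} [Fintype ι] [DecidableEq ι]
    [CommRing α] [LinearOrder α] [IsStrictOrderedRing α] {p a : ι → α}
    (h : ∀ τ : Equiv.Perm ι, ∑ i, p i * a i ≤ ∑ i, p (τ i) * a i) : Antivary p a := by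
  intro j k hjk
  by_contra! hp
  have hswap := h (Equiv.swap j k)
  rw [← sub_nonneg, ← Finset.sum_sub_distrib,
    Fintype.sum_eq_add j k (ne_of_apply_ne a hjk.ne) fun i hi => by
      rw [Equiv.swap_apply_of_ne_of_ne hi.1 hi.2, sub_self],
    Equiv.swap_apply_left, Equiv.swap_apply_right] at hswap
  nlinarith [mul_pos (sub_pos.mpr hp) (sub_pos.mpr hjk)]

section Sorting

variable {n : ℕ} {α β : Type*}

theorem Monotone.eq_of_map_univ_eq [PartialOrder α] {f g : Fin n → α} (hf : Monotone f)
    (hg : Monotone g) (h : Finset.univ.val.map f = Finset.univ.val.map g) : f = g := by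
  rw [Fin.univ_val_map, Fin.univ_val_map, Multiset.coe_eq_coe] at h
  exact List.ofFn_injective (h.eq_of_pairwise' hf.sortedLE_ofFn.pairwise hg.sortedLE_ofFn.pairwise)

theorem Antitone.eq_of_map_univ_eq [PartialOrder α] {f g : Fin n → α} (hf : Antitone f)
    (hg : Antitone g) (h : Finset.univ.val.map f = Finset.univ.val.map g) : f = g := by
  rw [Fin.univ_val_map, Fin.univ_val_map, Multiset.coe_eq_coe] at h
  exact List.ofFn_injective (h.eq_of_pairwise' hf.sortedGE_ofFn.pairwise hg.sortedGE_ofFn.pairwise)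

theorem Antivary.exists_perm_monotone_antitone [LinearOrder α] [LinearOrder β] {a : Fin n → α}
    {p : Fin n → β} (h : Antivary p a) :
    ∃ e : Equiv.Perm (Fin n), Monotone (a ∘ e) ∧ Antitone (p ∘ e) := by
  let F : Fin n → α ×ₗ βᵒᵈ := fun k => toLex (a k, OrderDual.toDual (p k))
  have hsort := Tuple.monotone_sort F
  refine ⟨Tuple.sort F, fun j k hjk => ?_, fun j k hjk => ?_⟩ <;>
    rcases Prod.Lex.le_iff.mp (hsort hjk) with hlt | ⟨heq, hle⟩
  · exact hlt.le
  · exact heq.le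
  · exact h hlt
  · exact hle

theorem Antivary.exists_perm_eq_comp [LinearOrder α] [LinearOrder β] {a a' : Fin n → α}
    {p p' : Fin n → β} (h : Antivary p a) (h' : Antivary p' a')
    (ha : Finset.univ.val.map a = Finset.univ.val.map a')
    (hp : Finset.univ.val.map p = Finset.univ.val.map p') :
    ∃ τ : Equiv.Perm (Fin n), a = a' ∘ τ ∧ p = p' ∘ τ := by
  obtain ⟨e, hae, hpe⟩ := h.exists_perm_monotone_antitone
  obtain ⟨e', hae', hpe'⟩ := h'.exists_perm_monotone_antitone
  have hA : a ∘ e = a' ∘ e' := hae.eq_of_map_univ_eq hae' <| by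
    simp only [← Multiset.map_map, Multiset.map_univ_val_equiv, ha]
  have hP : p ∘ e = p' ∘ e' := hpe.eq_of_map_univ_eq hpe' <| by
    simp only [← Multiset.map_map, Multiset.map_univ_val_equiv, hp]
  refine ⟨e.symm.trans e', funext fun k => ?_, funext fun k => ?_⟩
  · simpa using congrFun hA (e.symm k)
  · simpa using congrFun hP (e.symm k)

end Sorting

namespace QSLPaper

section Unitary

variable {ι : Type*} [Fintype ι]

theorem conj_mul_conj (X Y M : Matrix ι ι ℂ) :
    X * (Y * M * Yᴴ) * Xᴴ = (X * Y) * M * (X * Y)ᴴ := by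
  simp only [conjTranspose_mul, mul_assoc]

theorem trace_conj_mul (U σ A : Matrix ι ι ℂ) :
    (U * σ * Uᴴ * A).trace = (σ * (Uᴴ * A * U)).trace := by
  rw [mul_assoc, trace_mul_comm, ← mul_assoc, trace_mul_comm]

theorem eq_zero_of_re_trace_mul_self_eq_zero {C : Matrix ι ι ℂ} (hC : Cᴴ = -C)
    (h : (C * C).trace.re = 0) : C = 0 := by
  have hnonneg : 0 ≤ (C * Cᴴ).trace := (posSemidef_self_mul_conjTranspose C).trace_nonneg
  rw [← trace_mul_conjTranspose_self_eq_zero_iff]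
  apply Complex.ext
  · simpa [hC] using h
  · exact (Complex.nonneg_iff.mp hnonneg).2.symm

variable [DecidableEq ι]

theorem isUnitary_iff_mem_unitaryGroup {U : Matrix ι ι ℂ} :
    IsUnitary U ↔ U ∈ unitaryGroup ι ℂ :=
  (mem_unitaryGroup_iff' (A := U)).symm

namespace IsUnitary

variable {U V : Matrix ι ι ℂ}

theorem mul_conjTranspose_self (hU : IsUnitary U) : U * Uᴴ = 1 :=
  mul_eq_one_comm.mp hU

theorem mul (hU : IsUnitary U) (hV : IsUnitary V) : IsUnitary (U * V) :=
  isUnitary_iff_mem_unitaryGroup.mpr <| Submonoid.mul_mem _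
    (isUnitary_iff_mem_unitaryGroup.mp hU) (isUnitary_iff_mem_unitaryGroup.mp hV)

theorem conjTranspose (hU : IsUnitary U) : IsUnitary Uᴴ := by
  rw [IsUnitary, conjTranspose_conjTranspose]
  exact hU.mul_conjTranspose_self

theorem conjTranspose_conj_conj (hU : IsUnitary U) (M : Matrix ι ι ℂ) :
    Uᴴ * (U * M * Uᴴ) * U = M := by
  rw [← mul_assoc, ← mul_assoc, hU, one_mul, mul_assoc, hU, mul_one]

theorem conj_conj_conj (hV : IsUnitary V) (U X M : Matrix ι ι ℂ) :
    U * X * Vᴴ * (V * M * Vᴴ) * (U * X * Vᴴ)ᴴ = U * (X * M * Xᴴ) * Uᴴ := by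
  simp only [conjTranspose_mul, conjTranspose_conjTranspose, mul_assoc]
  rw [← mul_assoc Vᴴ V, hV, one_mul, ← mul_assoc Vᴴ V, hV, one_mul]

theorem charpoly_conj (hU : IsUnitary U) (M : Matrix ι ι ℂ) :
    (U * M * Uᴴ).charpoly = M.charpoly := by
  rw [charpoly_mul_comm, ← mul_assoc, hU, one_mul]

theorem re_trace_conj_diagonal_mul_conj_diagonal (hU : IsUnitary U) (f g : ι → ℝ) :
    (U * diagonal (fun k => (f k : ℂ)) * Uᴴ * (U * diagonal (fun k => (g k : ℂ)) * Uᴴ)).trace.re =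
      ∑ k, f k * g k := by
  rw [trace_conj_mul, hU.conjTranspose_conj_conj, diagonal_mul_diagonal, trace_diagonal,
    Complex.re_sum]
  simp only [← Complex.ofReal_mul, Complex.ofReal_re]

end IsUnitary

theorem isUnitary_permMatrix (τ : Equiv.Perm ι) : IsUnitary (τ.permMatrix ℂ) := by
  rw [IsUnitary, conjTranspose_permMatrix, ← permMatrix_mul, mul_inv_cancel, permMatrix_one]

theorem isUnitary_exp_smul {C : Matrix ι ι ℂ} (hC : Cᴴ = -C) (t : ℝ) :
    IsUnitary (exp (t • C)) :=
  isUnitary_iff_mem_unitaryGroup.mpr <|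
    exp_mem_unitary_of_mem_skewAdjoint (skewAdjoint.smul_mem t (skewAdjoint.mem_iff.mpr hC))

theorem eq_conj_diagonal_of_mulVec_col_eq {M U : Matrix ι ι ℂ} (hU : IsUnitary U) {d : ι → ℂ}
    (h : ∀ k, M *ᵥ (fun i => U i k) = d k • fun i => U i k) :
    M = U * diagonal d * Uᴴ := by
  have hMU : M * U = U * diagonal d := by
    ext i k
    rw [mul_diagonal, mul_comm]
    exact congrFun (h k) i
  rw [← hMU, mul_assoc, hU.mul_conjTranspose_self, mul_one]

theorem map_univ_eq_of_charpoly_conj_diagonal_eq {U U' : Matrix ι ι ℂ} (hU : IsUnitary U)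
    (hU' : IsUnitary U') {d d' : ι → ℝ}
    (h : (U * diagonal (fun k => (d k : ℂ)) * Uᴴ).charpoly =
      (U' * diagonal (fun k => (d' k : ℂ)) * U'ᴴ).charpoly) :
    Finset.univ.val.map d = Finset.univ.val.map d' := by
  have hroots := congrArg Polynomial.roots h
  simp only [hU.charpoly_conj, hU'.charpoly_conj, roots_charpoly_diagonal] at hroots
  apply Multiset.map_injective Complex.ofReal_injective
  simpa only [Multiset.map_map, Function.comp_def] using hroots

end Unitary

section Passive

variable {ι : Type*} [Fintype ι] [DecidableEq ι]

theorem IsPassive.conj {A ρi σ U : Matrix ι ι ℂ} (hσ : IsPassive A ρi σ)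
    (hUA : Uᴴ * A * U = A) : IsPassive A ρi (U * σ * Uᴴ) := by
  intro V hV
  rw [trace_conj_mul, hUA]
  exact hσ V hV

theorem hasDerivAt_re_trace_exp_conj (C σ A : Matrix ι ι ℂ) :
    HasDerivAt (fun t : ℝ => (exp (t • C) * σ * (exp (t • C))ᴴ * A).trace.re)
      ((C * σ + σ * Cᴴ) * A).trace.re 0 := by
  have hexp := hasDerivAt_exp_smul_const (𝕂 := ℝ) C 0
  rw [zero_smul, exp_zero, one_mul] at hexp
  have hconj := ((hexp.mul_const σ).mul hexp.star).mul_const A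
  let L : Matrix ι ι ℂ →L[ℝ] ℝ := Complex.reCLM.comp
    (LinearMap.toContinuousLinearMap ((traceLinearMap ι ℂ ℂ).restrictScalars ℝ))
  have h := L.hasFDerivAt.comp_hasDerivAt 0 hconj
  simp only [L, star_eq_conjTranspose, Pi.mul_apply, Function.comp_def,
    ContinuousLinearMap.comp_apply, LinearMap.coe_toContinuousLinearMap',
    LinearMap.coe_restrictScalars, traceLinearMap_apply, Complex.reCLM_apply, zero_smul, exp_zero,
    star_one, mul_one, one_mul] at h
  exact h

theorem commute_of_forall_re_trace_le_conj {A σ : Matrix ι ι ℂ} (hA : A.IsHermitian)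
    (hσ : σ.IsHermitian)
    (hmin : ∀ g, IsUnitary g → (σ * A).trace.re ≤ (g * σ * gᴴ * A).trace.re) :
    Commute A σ := by
  set C := σ * A - A * σ
  have hC : Cᴴ = -C := by
    simp only [C, conjTranspose_sub, conjTranspose_mul, hA.eq, hσ.eq, neg_sub]
  have hlocalMin : IsLocalMin (fun t : ℝ => (exp (t • C) * σ * (exp (t • C))ᴴ * A).trace.re) 0 :=
    Filter.Eventually.of_forall fun t => by
      simpa using hmin _ (isUnitary_exp_smul hC t)
  have hderiv := hlocalMin.hasDerivAt_eq_zero (hasDerivAt_re_trace_exp_conj C σ A)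
  have hderiv_eq : ((C * σ + σ * Cᴴ) * A).trace = (C * C).trace := by
    rw [hC, mul_neg, ← sub_eq_add_neg, sub_mul, trace_sub, mul_assoc σ, trace_mul_comm σ,
      mul_assoc, mul_assoc, ← trace_sub, ← mul_sub]
  rw [hderiv_eq] at hderiv
  exact (sub_eq_zero.mp (eq_zero_of_re_trace_mul_self_eq_zero hC hderiv)).symm

theorem IsPassive.commute {A ρi W : Matrix ι ι ℂ} (hA : A.IsHermitian) (hρi : ρi.IsHermitian)
    (hW : IsUnitary W) (hpass : IsPassive A ρi (W * ρi * Wᴴ)) :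
    Commute A (W * ρi * Wᴴ) :=
  commute_of_forall_re_trace_le_conj hA (isHermitian_mul_mul_conjTranspose W hρi) fun g hg => by
    rw [conj_mul_conj]
    exact hpass _ (hg.mul hW)

theorem IsPassive.antivary {A ρi W u : Matrix ι ι ℂ} {a p : ι → ℝ} (hW : IsUnitary W)
    (hpass : IsPassive A ρi (W * ρi * Wᴴ)) (hu : IsUnitary u)
    (hA : A = u * diagonal (fun k => (a k : ℂ)) * uᴴ)
    (hσ : W * ρi * Wᴴ = u * diagonal (fun k => (p k : ℂ)) * uᴴ) : Antivary p a := by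
  refine antivary_of_forall_sum_mul_le_sum_comp_perm_mul fun τ => ?_
  let X := u * τ.permMatrix ℂ * uᴴ
  have hX : IsUnitary X := (hu.mul (isUnitary_permMatrix τ)).mul hu.conjTranspose
  have hτ := hpass (X * W) (hX.mul hW)
  rw [← conj_mul_conj, hσ, hu.conj_conj_conj, permMatrix_mul_diagonal_mul_conjTranspose, hA]
    at hτ
  simpa only [Function.comp_def, hu.re_trace_conj_diagonal_mul_conj_diagonal] using hτ

end Passive

theorem exists_unitary_conj_diagonal_of_commute {n : ℕ} {A B : Matrix (Fin n) (Fin n) ℂ}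
    (hA : A.IsHermitian) (hB : B.IsHermitian) (hAB : Commute A B) :
    ∃ (u : Matrix (Fin n) (Fin n) ℂ) (a b : Fin n → ℝ), IsUnitary u ∧
      A = u * diagonal (fun k => (a k : ℂ)) * uᴴ ∧ B = u * diagonal (fun k => (b k : ℂ)) * uᴴ := by
  obtain ⟨e, a, b, he⟩ :=
    (isSymmetric_toEuclideanLin_iff.mpr hA).exists_orthonormalBasis_eigenvectors_of_commute
      finrank_euclideanSpace_fin (isSymmetric_toEuclideanLin_iff.mpr hB)
      (hAB.map (toLpLinAlgEquiv 2))
  let u := (EuclideanSpace.basisFun (Fin n) ℂ).toBasis.toMatrix e.toBasis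
  have hu : IsUnitary u := isUnitary_iff_mem_unitaryGroup.mpr
    ((EuclideanSpace.basisFun (Fin n) ℂ).toMatrix_orthonormalBasis_mem_unitary e)
  refine ⟨u, a, b, hu, eq_conj_diagonal_of_mulVec_col_eq hu fun k => ?_,
    eq_conj_diagonal_of_mulVec_col_eq hu fun k => ?_⟩
  · exact congrArg WithLp.ofLp (he k).1
  · exact congrArg WithLp.ofLp (he k).2

theorem exists_conj_eq_of_isPassive {n : ℕ} {A ρi P W : Matrix (Fin n) (Fin n) ℂ}
    (hA : A.IsHermitian) (hρi : ρi.IsHermitian) (hP : IsUnitary P)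
    (hPpass : IsPassive A ρi (P * ρi * Pᴴ)) (hW : IsUnitary W)
    (hWpass : IsPassive A ρi (W * ρi * Wᴴ)) :
    ∃ U, IsUnitary U ∧ Uᴴ * A * U = A ∧ U * (P * ρi * Pᴴ) * Uᴴ = W * ρi * Wᴴ := by
  obtain ⟨u, a, p, hu, hAu, hσW⟩ := exists_unitary_conj_diagonal_of_commute hA
    (isHermitian_mul_mul_conjTranspose W hρi) (hWpass.commute hA hρi hW)
  obtain ⟨v, c, q, hv, hAv, hσP⟩ := exists_unitary_conj_diagonal_of_commute hA
    (isHermitian_mul_mul_conjTranspose P hρi) (hPpass.commute hA hρi hP)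
  have hac : Finset.univ.val.map a = Finset.univ.val.map c :=
    map_univ_eq_of_charpoly_conj_diagonal_eq hu hv (by rw [← hAu, ← hAv])
  have hpq : Finset.univ.val.map p = Finset.univ.val.map q :=
    map_univ_eq_of_charpoly_conj_diagonal_eq hu hv
      (by rw [← hσW, ← hσP, hW.charpoly_conj, hP.charpoly_conj])
  obtain ⟨τ, rfl, rfl⟩ := (hWpass.antivary hW hu hAu hσW).exists_perm_eq_comp
    (hPpass.antivary hP hv hAv hσP) hac hpq
  let U := u * τ.permMatrix ℂ * vᴴ
  have hU : IsUnitary U := (hu.mul (isUnitary_permMatrix τ)).mul hv.conjTranspose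
  have hconj : ∀ d : Fin n → ℝ, U * (v * diagonal (fun k => (d k : ℂ)) * vᴴ) * Uᴴ =
      u * diagonal (fun k => (d (τ k) : ℂ)) * uᴴ := fun d => by
    rw [hv.conj_conj_conj, permMatrix_mul_diagonal_mul_conjTranspose]
    rfl
  refine ⟨U, hU, ?_, by rw [hσP, hconj]; exact hσW.symm⟩
  have hUA : U * A * Uᴴ = A := by
    conv_lhs => rw [hAv]
    rw [hconj]
    exact hAu.symm
  conv_lhs => rw [← hUA]
  exact hU.conjTranspose_conj_conj A

theorem passivizing_set_eq_double_coset_general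
    {n : ℕ} (A ρi : Matrix (Fin n) (Fin n) ℂ)
    (hA : A.IsHermitian) (hρi : IsDensity ρi)
    (P : Matrix (Fin n) (Fin n) ℂ) (hP : P ∈ PassivizingSet A ρi) :
    PassivizingSet A ρi =
      {W | ∃ U V : Matrix (Fin n) (Fin n) ℂ,
        IsUnitary U ∧ IsUnitary V ∧ Uᴴ * A * U = A ∧ V * ρi * Vᴴ = ρi ∧ W = U * P * V} := by
  obtain ⟨hPu, hPpass⟩ := hP
  ext W
  constructor
  · rintro ⟨hW, hWpass⟩
    obtain ⟨U, hU, hUA, hUσ⟩ := exists_conj_eq_of_isPassive hA hρi.1.1 hPu hPpass hW hWpass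
    have hUP : IsUnitary (U * P) := hU.mul hPu
    refine ⟨U, (U * P)ᴴ * W, hU, hUP.conjTranspose.mul hW, hUA, ?_, ?_⟩
    · rw [← conj_mul_conj, ← hUσ, conj_mul_conj U P, conjTranspose_conjTranspose,
        hUP.conjTranspose_conj_conj]
    · rw [← mul_assoc, hUP.mul_conjTranspose_self, one_mul]
  · rintro ⟨U, V, hU, hV, hUA, hVρi, rfl⟩
    refine ⟨(hU.mul hPu).mul hV, ?_⟩
    rw [← conj_mul_conj, hVρi, ← conj_mul_conj]
    exact hPpass.conj hUA

/-- `P(ρi) = { U P V : U, V unitary, U†AU = A, VρiV† = ρi }` for any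
`P ∈ P(ρi)`. -/
theorem passivizing_set_eq_double_coset
    {n : ℕ} (hn : 1 ≤ n) (A ρi : Matrix (Fin n) (Fin n) ℂ)
    (hA : A.IsHermitian) (hρi : IsDensity ρi) (hcomm : A * ρi = ρi * A)
    (P : Matrix (Fin n) (Fin n) ℂ) (hP : P ∈ PassivizingSet A ρi) :
    PassivizingSet A ρi =
      {W | ∃ U V : Matrix (Fin n) (Fin n) ℂ,
        IsUnitary U ∧ IsUnitary V ∧ Uᴴ * A * U = A ∧ V * ρi * Vᴴ = ρi ∧ W = U * P * V} :=
  passivizing_set_eq_double_coset_general A ρi hA hρi P hP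

end QSLPaper
end
end

section
/- The passivization time is a tight bound on the duration of complete discharge processes: assume there exists a Hermitian matrix V_I with tr(V_I²) ≤ ω² such that exp(-iτ_pas·V_I)·ρ_i·exp(iτ_pas·V_I) is passive. Then for every ε > 0 there exist τ ∈ [τ_pas, τ_pas + ε], a continuous V : ℝ → {Hermitian n×n matrices} with V(t) = 0 for all t ∉ (0,τ) and tr(V(t)²) ≤ ω² for all t, and a differentiable ρ : [0,τ] → M_n(ℂ) with ρ(0) = ρ_i, ρ'(t) = -i[H + V(t), ρ(t)] for all t ∈ [0,τ], and ρ(τ) passive. -/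
/-! Drive the battery with `V(t) = f(t) e^{-iHt} V_I e^{iHt}`, where `f` is a trapezoidal
profile with values in `[0,1]`, vanishing outside `(0,τ)` and of total area `τ_pas`. In the
interaction picture the state is `e^{-iHt} e^{-iF(t)V_I} ρ_i e^{iF(t)V_I} e^{iHt}` with
`F = ∫₀ᵗ f`, so at time `τ` it differs from the passive state `e^{-iτ_pas V_I} ρ_i e^{iτ_pas V_I}`
only by the free evolution `e^{-iHτ}`, which commutes with `H` and so preserves the energy.
The bandwidth bound holds because `tr V(t)² = f(t)² tr V_I² ≤ ω²`. -/

open Matrix Kronecker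
open scoped ComplexOrder

attribute [local instance] Matrix.frobeniusSeminormedAddCommGroup
  Matrix.frobeniusNormedAddCommGroup Matrix.frobeniusNormedSpace

noncomputable section

namespace QSLPaper

attribute [local instance] Matrix.frobeniusNormedRing Matrix.frobeniusNormedAlgebra

open NormedSpace
open Complex (I)

section Trapezoid

def trapezoid (δ τ t : ℝ) : ℝ := max 0 (min 1 (min t (τ - t) / δ))

variable {δ τ : ℝ}

theorem continuous_trapezoid : Continuous (trapezoid δ τ) := by
  unfold trapezoid; fun_prop

theorem trapezoid_mem_Icc (t : ℝ) : trapezoid δ τ t ∈ Set.Icc 0 1 :=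
  ⟨le_max_left _ _, max_le zero_le_one (min_le_left _ _)⟩

theorem trapezoid_eq_zero_of_notMem (hδ : 0 ≤ δ) {t : ℝ} (ht : t ∉ Set.Ioo 0 τ) :
    trapezoid δ τ t = 0 := by
  have hmin : min t (τ - t) ≤ 0 := by
    rw [Set.mem_Ioo, not_and_or, not_lt, not_lt] at ht
    rcases ht with h | h
    · exact (min_le_left _ _).trans h
    · exact (min_le_right _ _).trans (by linarith)
  exact max_eq_left ((min_le_right _ _).trans (div_nonpos_of_nonpos_of_nonneg hmin hδ))

theorem integral_trapezoid (hδ : 0 < δ) (hτ : 2 * δ ≤ τ) :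
    ∫ t in (0 : ℝ)..τ, trapezoid δ τ t = τ - δ := by
  have hint : ∀ a b, IntervalIntegrable (trapezoid δ τ) MeasureTheory.volume a b :=
    fun _ _ => continuous_trapezoid.intervalIntegrable _ _
  have hrise : ∫ t in (0 : ℝ)..δ, trapezoid δ τ t = δ / 2 := by
    rw [intervalIntegral.integral_congr (g := fun t => t / δ), intervalIntegral.integral_div,
      integral_id]
    · field_simp; ring
    intro t ht
    rw [Set.uIcc_of_le hδ.le] at ht
    simp only [trapezoid]
    rw [min_eq_left (show t ≤ τ - t by linarith [ht.2]), min_eq_right ((div_le_one hδ).2 ht.2),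
      max_eq_right (div_nonneg ht.1 hδ.le)]
  have hflat : ∫ t in δ..(τ - δ), trapezoid δ τ t = τ - 2 * δ := by
    rw [intervalIntegral.integral_congr (g := fun _ => 1), intervalIntegral.integral_const]
    · simp only [smul_eq_mul, mul_one]; ring
    intro t ht
    rw [Set.uIcc_of_le (by linarith)] at ht
    simp only [trapezoid]
    rw [min_eq_left ((one_le_div hδ).2 (le_min ht.1 (by linarith [ht.2]))),
      max_eq_right zero_le_one]
  have hfall : ∫ t in (τ - δ)..τ, trapezoid δ τ t = δ / 2 := by
    rw [intervalIntegral.integral_congr (g := fun t => (τ - t) / δ), intervalIntegral.integral_div,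
      intervalIntegral.integral_comp_sub_left (fun t => t) τ, integral_id]
    · field_simp; ring
    intro t ht
    rw [Set.uIcc_of_le (by linarith)] at ht
    simp only [trapezoid]
    rw [min_eq_right (show τ - t ≤ t by linarith [ht.1]),
      min_eq_right ((div_le_one hδ).2 (show τ - t ≤ δ by linarith [ht.1])),
      max_eq_right (div_nonneg (by linarith [ht.2]) hδ.le)]
  rw [← intervalIntegral.integral_add_adjacent_intervals (hint 0 δ) (hint δ τ),
    ← intervalIntegral.integral_add_adjacent_intervals (hint δ (τ - δ)) (hint (τ - δ) τ),
    hrise, hflat, hfall]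
  ring

end Trapezoid

theorem exists_profile_integral_eq {T ε : ℝ} (hT : 0 ≤ T) (hε : 0 < ε) :
    ∃ τ ∈ Set.Icc T (T + ε), ∃ f : ℝ → ℝ, Continuous f ∧ (∀ t, f t ∈ Set.Icc 0 1) ∧
      (∀ t, t ∉ Set.Ioo 0 τ → f t = 0) ∧ ∫ t in (0 : ℝ)..τ, f t = T := by
  rcases hT.eq_or_lt with rfl | hT
  · exact ⟨0, ⟨le_rfl, by linarith⟩, 0, continuous_const, fun _ => ⟨le_rfl, zero_le_one⟩,
      fun _ _ => rfl, by simp⟩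
  -- ramps of width `δ ≤ T` at both ends of `[0, T + δ]` leave area exactly `T`
  set δ := min ε T
  have hδ : 0 < δ := lt_min hε hT
  refine ⟨T + δ, ⟨by linarith, by linarith [min_le_left ε T]⟩, trapezoid δ (T + δ),
    continuous_trapezoid, trapezoid_mem_Icc, fun _ => trapezoid_eq_zero_of_notMem hδ.le, ?_⟩
  rw [integral_trapezoid hδ (by linarith [min_le_right ε T])]
  ring

section InteractionPicture

variable {𝔸 : Type*} [NormedRing 𝔸] [NormedAlgebra ℂ 𝔸]

theorem hasDerivAt_conj_of_schrodinger {W W' : ℝ → 𝔸} {K : 𝔸} {t : ℝ} (ρ₀ : 𝔸)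
    (hW : HasDerivAt W ((-I) • (K * W t)) t) (hW' : HasDerivAt W' (I • (W' t * K)) t) :
    HasDerivAt (fun s => W s * ρ₀ * W' s)
      ((-I) • (K * (W t * ρ₀ * W' t) - W t * ρ₀ * W' t * K)) t := by
  refine ((hW.mul_const ρ₀).mul hW').congr_deriv ?_
  simp only [smul_mul_assoc, mul_smul_comm, mul_assoc, smul_sub]
  module

theorem commute_exp_smul_self (c : ℂ) (a : 𝔸) : Commute (exp (c • a)) a :=
  ((Commute.refl a).smul_left c).exp_left

def propagator (H V : 𝔸) (F : ℝ → ℝ) (s : ℝ) : 𝔸 :=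
  exp ((-I * s) • H) * exp ((-I * F s) • V)

def propagatorInv (H V : 𝔸) (F : ℝ → ℝ) (s : ℝ) : 𝔸 :=
  exp ((I * F s) • V) * exp ((I * s) • H)

def interaction (H V : 𝔸) (f : ℝ → ℝ) (s : ℝ) : 𝔸 :=
  (f s : ℂ) • (exp ((-I * s) • H) * V * exp ((I * s) • H))

variable {H V : 𝔸} {F f : ℝ → ℝ} {t : ℝ}

theorem propagator_zero (hF : F 0 = 0) : propagator H V F 0 = 1 := by
  simp [propagator, hF]

theorem propagatorInv_zero (hF : F 0 = 0) : propagatorInv H V F 0 = 1 := by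
  simp [propagatorInv, hF]

theorem interaction_eq_zero (h : f t = 0) : interaction H V f t = 0 := by
  simp [interaction, h]

theorem propagator_mul_mul_propagatorInv_mul (X : 𝔸) (s : ℝ) :
    propagator H V F s * X * propagatorInv H V F s * H =
      exp ((-I * s) • H) * (exp ((-I * F s) • V) * X * exp ((I * F s) • V) * H) *
        exp ((I * s) • H) := by
  simp only [propagator, propagatorInv, mul_assoc, (commute_exp_smul_self _ H).eq]

theorem isSelfAdjoint_interaction [StarRing 𝔸] [StarModule ℂ 𝔸] [ContinuousStar 𝔸]
    (hH : IsSelfAdjoint H) (hV : IsSelfAdjoint V) : IsSelfAdjoint (interaction H V f t) := by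
  have hE : star (exp ((-I * t) • H)) = exp ((I * t) • H) := by
    rw [star_exp, star_smul, hH.star_eq]; simp
  rw [interaction, IsSelfAdjoint, star_smul, star_mul, star_mul, hE, ← hE, star_star, hV.star_eq,
    ← mul_assoc, Complex.star_def, Complex.conj_ofReal]

variable [CompleteSpace 𝔸]

theorem exp_smul_mul_exp_neg_smul (c : ℂ) (a : 𝔸) : exp (c • a) * exp (-c • a) = 1 := by
  have hball : ∀ x : 𝔸, x ∈ Metric.eball 0 (expSeries ℂ 𝔸).radius := fun x => by
    rw [expSeries_radius_eq_top]; exact edist_lt_top _ _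
  rw [← exp_add_of_commute_of_mem_ball (𝕂 := ℂ) ((Commute.refl a).smul_left c |>.smul_right _)
    (hball _) (hball _), ← add_smul, add_neg_cancel, zero_smul, exp_zero]

theorem exp_I_mul_smul_mul_exp_neg_I_mul_smul (x : ℂ) (a : 𝔸) :
    exp ((I * x) • a) * exp ((-I * x) • a) = 1 := by
  simpa only [neg_mul] using exp_smul_mul_exp_neg_smul (I * x) a

theorem hasDerivAt_exp_mul_ofReal_smul {F : ℝ → ℝ} {f t : ℝ} (c : ℂ) (a : 𝔸)
    (hF : HasDerivAt F f t) :
    HasDerivAt (fun s => exp ((c * F s) • a)) ((c * f) • (a * exp ((c * F t) • a))) t :=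
  HasDerivAt.scomp (g₁ := fun u : ℂ => exp (u • a)) t (hasDerivAt_exp_smul_const' a (c * F t))
    (hF.ofReal_comp.const_mul c)

theorem continuous_exp_mul_ofReal_smul (c : ℂ) (a : 𝔸) :
    Continuous fun s : ℝ => exp ((c * s) • a) :=
  continuous_iff_continuousAt.2 fun t =>
    (hasDerivAt_exp_mul_ofReal_smul c a (hasDerivAt_id t)).continuousAt

theorem hasDerivAt_propagator (hF : HasDerivAt F (f t) t) :
    HasDerivAt (propagator H V F)
      ((-I) • ((H + interaction H V f t) * propagator H V F t)) t := by
  refine ((hasDerivAt_exp_mul_ofReal_smul (-I) H (hasDerivAt_id t)).mul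
    (hasDerivAt_exp_mul_ofReal_smul (-I) V hF)).congr_deriv ?_
  simp only [propagator, interaction, id, Complex.ofReal_one, mul_one, add_mul, smul_mul_assoc,
    mul_smul_comm, smul_add, smul_smul, mul_assoc]
  rw [← mul_assoc (exp ((I * t) • H)), exp_I_mul_smul_mul_exp_neg_I_mul_smul, one_mul]

theorem hasDerivAt_propagatorInv (hF : HasDerivAt F (f t) t) :
    HasDerivAt (propagatorInv H V F)
      (I • (propagatorInv H V F t * (H + interaction H V f t))) t := by
  refine ((hasDerivAt_exp_mul_ofReal_smul I V hF).mul
    (hasDerivAt_exp_mul_ofReal_smul I H (hasDerivAt_id t))).congr_deriv ?_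
  simp only [propagatorInv, interaction, id, Complex.ofReal_one, mul_one, mul_add, smul_mul_assoc,
    mul_smul_comm, smul_add, smul_smul, ← mul_assoc]
  rw [mul_assoc (exp ((I * F t) • V)) (exp ((I * t) • H)) (exp ((-I * t) • H)),
    exp_I_mul_smul_mul_exp_neg_I_mul_smul, mul_one, (commute_exp_smul_self _ V).eq, mul_assoc _ H,
    ← (commute_exp_smul_self _ H).eq, ← mul_assoc]
  exact add_comm _ _

theorem continuous_interaction (hf : Continuous f) : Continuous (interaction H V f) :=
  (Complex.continuous_ofReal.comp hf).smul
    (((continuous_exp_mul_ofReal_smul _ H).mul continuous_const).mul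
      (continuous_exp_mul_ofReal_smul _ H))

theorem interaction_mul_self :
    interaction H V f t * interaction H V f t =
      ((f t : ℂ) ^ 2) • (exp ((-I * t) • H) * (V * V) * exp ((I * t) • H)) := by
  simp only [interaction, smul_mul_smul_comm, sq, mul_assoc]
  rw [← mul_assoc (exp ((I * t) • H)) (exp ((-I * t) • H)),
    exp_I_mul_smul_mul_exp_neg_I_mul_smul, one_mul]

end InteractionPicture

section Matrix

variable {ι : Type*} [Fintype ι] [DecidableEq ι]

theorem trace_conj_of_mul_eq_one {R : Type*} [CommSemiring R] {E E' : Matrix ι ι R}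
    (h : E' * E = 1) (X : Matrix ι ι R) : (E * X * E').trace = X.trace := by
  rw [trace_mul_cycle, h, one_mul]

theorem IsPassive.of_trace_mul_eq {A ρi ρ σ : Matrix ι ι ℂ} (hσ : IsPassive A ρi σ)
    (h : (ρ * A).trace = (σ * A).trace) : IsPassive A ρi ρ :=
  fun V hV => h ▸ hσ V hV

omit [DecidableEq ι] in
theorem _root_.Matrix.IsHermitian.re_trace_mul_self_nonneg {A : Matrix ι ι ℂ}
    (hA : A.IsHermitian) : 0 ≤ (A * A).trace.re := by
  have h := (posSemidef_conjTranspose_mul_self A).trace_nonneg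
  rw [hA.eq] at h
  exact (Complex.nonneg_iff.mp h).1

variable {H V : Matrix ι ι ℂ} {f : ℝ → ℝ} {t : ℝ}

theorem re_trace_interaction_mul_self_le (hV : V.IsHermitian) (hf : f t ∈ Set.Icc 0 1) :
    (interaction H V f t * interaction H V f t).trace.re ≤ (V * V).trace.re := by
  rw [interaction_mul_self, trace_smul,
    trace_conj_of_mul_eq_one (exp_I_mul_smul_mul_exp_neg_I_mul_smul _ H), smul_eq_mul,
    ← Complex.ofReal_pow, Complex.re_ofReal_mul]
  exact mul_le_of_le_one_left hV.re_trace_mul_self_nonneg (pow_le_one₀ hf.1 hf.2)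

theorem trace_conj_propagator_mul {F : ℝ → ℝ} (X : Matrix ι ι ℂ) (s : ℝ) :
    (propagator H V F s * X * propagatorInv H V F s * H).trace =
      (exp ((-I * F s) • V) * X * exp ((I * F s) • V) * H).trace := by
  rw [propagator_mul_mul_propagatorInv_mul,
    trace_conj_of_mul_eq_one (exp_I_mul_smul_mul_exp_neg_I_mul_smul _ H)]
  -- the two sides differ only in the topology (Frobenius vs. entrywise) used to define `exp`
  rfl

end Matrix

theorem tauPas_nonneg {ι : Type*} [Fintype ι] [DecidableEq ι] (A ρi : Matrix ι ι ℂ) (ω : ℝ) :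
    0 ≤ tauPas A ρi ω :=
  Real.sInf_nonneg fun _ hx => hx.1

open NormedSpace in
theorem tauPas_tight_for_discharge_general
    {n : ℕ} (H ρi : Matrix (Fin n) (Fin n) ℂ)
    (hH : H.IsHermitian)
    (ω : ℝ)
    (VI : Matrix (Fin n) (Fin n) ℂ) (hVI : VI.IsHermitian)
    (hVIb : ((VI * VI).trace).re ≤ ω^2)
    (hVIopt : IsPassive H ρi
      (exp ((-(Complex.I) * ((tauPas H ρi ω : ℝ) : ℂ)) • VI) * ρi *
        exp ((Complex.I * ((tauPas H ρi ω : ℝ) : ℂ)) • VI))) :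
    ∀ ε > (0:ℝ), ∃ τ ∈ Set.Icc (tauPas H ρi ω) (tauPas H ρi ω + ε),
      ∃ V : ℝ → Matrix (Fin n) (Fin n) ℂ,
        Continuous V ∧
        (∀ t, t ∉ Set.Ioo (0:ℝ) τ → V t = 0) ∧
        (∀ t, (V t).IsHermitian) ∧
        (∀ t, ((V t * V t).trace).re ≤ ω^2) ∧
        ∃ ρ : ℝ → Matrix (Fin n) (Fin n) ℂ,
          ρ 0 = ρi ∧
          (∀ t ∈ Set.Icc (0:ℝ) τ,
            HasDerivWithinAt ρ ((-Complex.I) • ((H + V t) * ρ t - ρ t * (H + V t)))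
              (Set.Icc 0 τ) t) ∧
          IsPassive H ρi (ρ τ) := by
  intro ε hε
  obtain ⟨τ, hτ, f, hf, hf01, hf0, hfτ⟩ := exists_profile_integral_eq (tauPas_nonneg H ρi ω) hε
  set F : ℝ → ℝ := fun t => ∫ s in (0 : ℝ)..t, f s
  have hF : ∀ t, HasDerivAt F (f t) t := fun t => (hf.integral_hasStrictDerivAt 0 t).hasDerivAt
  refine ⟨τ, hτ, interaction H VI f, continuous_interaction hf,
    fun t ht => interaction_eq_zero (hf0 t ht),
    fun t => isSelfAdjoint_interaction hH.isSelfAdjoint hVI.isSelfAdjoint,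
    fun t => (re_trace_interaction_mul_self_le hVI (hf01 t)).trans hVIb,
    fun t => propagator H VI F t * ρi * propagatorInv H VI F t, ?_, fun t _ => ?_, ?_⟩
  · have hF0 : F 0 = 0 := intervalIntegral.integral_same
    simp [propagator_zero hF0, propagatorInv_zero hF0]
  · exact (hasDerivAt_conj_of_schrodinger ρi (hasDerivAt_propagator (hF t))
      (hasDerivAt_propagatorInv (hF t))).hasDerivWithinAt
  · refine hVIopt.of_trace_mul_eq ?_
    rw [trace_conj_propagator_mul, show F τ = tauPas H ρi ω from hfτ]

open NormedSpace in
/-- the passivization time is a tight bound on the duration of complete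
discharge processes: there are complete discharge processes of duration arbitrarily close
to `τ_pas`. -/
theorem tauPas_tight_for_discharge
    {n : ℕ} (hn : 1 ≤ n) (H ρi : Matrix (Fin n) (Fin n) ℂ)
    (hH : H.IsHermitian) (hρi : IsDensity ρi) (hcomm : H * ρi = ρi * H)
    (ω : ℝ) (hω : 0 < ω)
    (VI : Matrix (Fin n) (Fin n) ℂ) (hVI : VI.IsHermitian)
    (hVIb : ((VI * VI).trace).re ≤ ω^2)
    (hVIopt : IsPassive H ρi
      (exp ((-(Complex.I) * ((tauPas H ρi ω : ℝ) : ℂ)) • VI) * ρi *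
        exp ((Complex.I * ((tauPas H ρi ω : ℝ) : ℂ)) • VI))) :
    ∀ ε > (0:ℝ), ∃ τ ∈ Set.Icc (tauPas H ρi ω) (tauPas H ρi ω + ε),
      ∃ V : ℝ → Matrix (Fin n) (Fin n) ℂ,
        Continuous V ∧
        (∀ t, t ∉ Set.Ioo (0:ℝ) τ → V t = 0) ∧
        (∀ t, (V t).IsHermitian) ∧
        (∀ t, ((V t * V t).trace).re ≤ ω^2) ∧
        ∃ ρ : ℝ → Matrix (Fin n) (Fin n) ℂ,
          ρ 0 = ρi ∧
          (∀ t ∈ Set.Icc (0:ℝ) τ,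
            HasDerivWithinAt ρ ((-Complex.I) • ((H + V t) * ρ t - ρ t * (H + V t)))
              (Set.Icc 0 τ) t) ∧
          IsPassive H ρi (ρ τ) :=
  tauPas_tight_for_discharge_general H ρi hH ω VI hVI hVIb hVIopt

end QSLPaper
end
end
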